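/- In the setting of the primal-dual pair above, a pair (m*, m̄*) is optimal for the primal and Λ* is optimal for the dual if and only if: Σ_{j∈i} m*_{ji} = m̄*_i for all i; Σ_{i: j∈i} Λ*_i ≤ C_j for all j; m*_j·Λ*_i = m*_{ji}·C_j for all (j,i) ∈ 𝒦; and exp(G_i'(m̄*_i)) = Λ*_i for all i. -/

import Mathlib

open Real Finset Filter Topology

/-!
Weak duality is Gibbs' inequality on each link `j`: if `Λ` satisfies the constraint of link `j`
and `M_j = Σ_i m_{ji}`, then `Σ_i m_{ji} log (m_{ji} C_j / M_j) ≥ Σ_i m_{ji} log Λ_i`, with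
equality exactly when `M_j Λ_i = m_{ji} C_j` on the routes through `j`; and
`U_i(Λ_i) ≤ m̄_i log Λ_i - G_i(m̄_i)` by definition of `U_i`, with equality when
`log Λ_i = G_i'(m̄_i)`, by concavity. So the four conditions make the primal and dual values
equal, and both points are optimal.

Conversely, perturbing a primal optimum on a single link shows that the prices
`μ_i = exp G_i'(m̄*_i)` satisfy complementary slackness (a used link carries flow on every route
through it) and all link constraints (on an unused link, by differentiating along the flow `t μ`). Then `μ` attains the primal value, so by dual
optimality `Λ*` is in the equality case of weak duality, which forces `Λ* = μ`.
-/

theorem sub_le_mul_log_div {x y : ℝ} (hx : 0 ≤ x) (hy : 0 < y) : x - y ≤ x * log (x / y) := by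
  rcases hx.eq_or_lt with rfl | hx
  · simpa using hy.le
  have h := one_sub_inv_le_log_of_pos (div_pos hx hy)
  rw [inv_div] at h
  calc x - y = x * (1 - y / x) := by field_simp
    _ ≤ x * log (x / y) := mul_le_mul_of_nonneg_left h hx.le

theorem eq_of_mul_log_div_le_sub {x y : ℝ} (hx : 0 ≤ x) (hy : 0 < y)
    (h : x * log (x / y) ≤ x - y) : x = y := by
  rcases hx.eq_or_lt with rfl | hx
  · rw [zero_mul] at h
    linarith
  by_contra hne
  have hlt := log_lt_sub_one_of_pos (div_pos hy hx)
    (by rwa [ne_eq, div_eq_one_iff_eq hx.ne', eq_comm])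
  rw [← inv_div x y, log_inv, inv_div] at hlt
  have : x - y < x * log (x / y) := by
    calc x - y = x * (1 - y / x) := by field_simp
      _ < x * log (x / y) := mul_lt_mul_of_pos_left (by linarith) hx
  linarith

theorem ConcaveOn.le_add_deriv_mul_sub {S : Set ℝ} {f : ℝ → ℝ} {x y : ℝ} (hf : ConcaveOn ℝ S f)
    (hx : x ∈ S) (hy : y ∈ S) (hd : DifferentiableAt ℝ f x) :
    f y ≤ f x + deriv f x * (y - x) := by
  rcases lt_trichotomy x y with hxy | rfl | hxy
  · have h := hf.slope_le_deriv hx hy hxy hd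
    rw [slope_def_field, div_le_iff₀ (sub_pos.2 hxy)] at h
    linarith
  · simp
  · have h := hf.deriv_le_slope hy hx hxy hd
    rw [slope_def_field, le_div_iff₀ (sub_pos.2 hxy)] at h
    linarith

theorem isLeast_deriv_mul_sub {g : ℝ → ℝ} {x : ℝ} (hg : ConcaveOn ℝ (Set.Ioi 0) g) (hx : 0 < x)
    (hd : DifferentiableAt ℝ g x) :
    IsLeast {z | ∃ m, 0 < m ∧ z = deriv g x * m - g m} (deriv g x * x - g x) := by
  refine ⟨⟨x, hx, rfl⟩, ?_⟩
  rintro z ⟨m, hm, rfl⟩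
  have := hg.le_add_deriv_mul_sub hx hm hd
  linarith

theorem Finset.sum_update_eq_sum_sub_add {ι M : Type*} [Fintype ι] [DecidableEq ι]
    [AddCommGroup M] (f : ι → M) (i : ι) (b : M) :
    ∑ k, Function.update f i b k = ∑ k, f k - f i + b := by
  rw [sum_update_of_mem (mem_univ i), ← add_sum_erase univ f (mem_univ i),
    sdiff_singleton_eq_erase]
  abel

theorem HasDerivAt.comp_const_add_zero {𝕜 F : Type*} [NontriviallyNormedField 𝕜]
    [NormedAddCommGroup F] [NormedSpace 𝕜 F] {f : 𝕜 → F} {f' : F} {a : 𝕜}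
    (hf : HasDerivAt f f' a) : HasDerivAt (fun t => f (a + t)) f' 0 :=
  HasDerivAt.comp_const_add a 0 (by rwa [add_zero])

section LinkEntropy

variable {ι : Type*} [Fintype ι]

noncomputable def linkEntropy (c : ℝ) (x : ι → ℝ) : ℝ := ∑ i, x i * log (x i * c / ∑ r, x r)

variable {s : Finset ι} {c : ℝ} {x : ι → ℝ}

theorem linkEntropy_eq_of_nonneg (hc : 0 < c) (hx : 0 ≤ x) :
    linkEntropy c x =
      ∑ i, x i * log (x i) + (∑ i, x i) * log c - (∑ i, x i) * log (∑ i, x i) := by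
  rw [linkEntropy, sum_mul, sum_mul, ← sum_add_distrib, ← sum_sub_distrib]
  refine sum_congr rfl fun i _ => ?_
  rcases (hx i).eq_or_lt with h | h
  · simp [← h]
  · rw [log_div (mul_pos h hc).ne' (sum_pos' (fun r _ => hx r) ⟨i, mem_univ i, h⟩).ne',
      log_mul h.ne' hc.ne']
    ring

theorem linkEntropy_smul {t : ℝ} (ht : 0 < t) (x : ι → ℝ) :
    linkEntropy c (t • x) = t * linkEntropy c x := by
  simp only [linkEntropy, Pi.smul_apply, smul_eq_mul, ← mul_sum, mul_assoc,
    mul_div_mul_left _ _ ht.ne']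

theorem linkEntropy_sub_sum_mul_log (hc : 0 < c) (hx : 0 ≤ x) (hxs : ∀ i ∉ s, x i = 0)
    {Λ : ι → ℝ} (hΛ : ∀ i, 0 < Λ i) (hM : 0 < ∑ r, x r) :
    linkEntropy c x - ∑ i, x i * log (Λ i) =
      ∑ i ∈ s, x i * log (x i / ((∑ r, x r) * Λ i / c)) := by
  rw [linkEntropy, ← sum_sub_distrib, ← sum_subset (subset_univ s)]
  · refine sum_congr rfl fun i _ => ?_
    rcases (hx i).eq_or_lt with h | h
    · simp [← h]
    · rw [← mul_sub, ← log_div (div_pos (mul_pos h hc) hM).ne' (hΛ i).ne']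
      congr 2
      field_simp
  · intro i _ hi
    simp [hxs i hi]

theorem sum_sub_mul_div_nonneg (hc : 0 < c) (hx : 0 ≤ x) (hxs : ∀ i ∉ s, x i = 0)
    {Λ : ι → ℝ} (hΛc : ∑ i ∈ s, Λ i ≤ c) :
    0 ≤ ∑ i ∈ s, (x i - (∑ r, x r) * Λ i / c) := by
  rw [sum_sub_distrib, ← sum_div, ← mul_sum, sum_subset (subset_univ s) fun i _ hi => hxs i hi,
    sub_nonneg, div_le_iff₀ hc]
  exact mul_le_mul_of_nonneg_left hΛc (sum_nonneg fun r _ => hx r)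

theorem sum_mul_log_le_linkEntropy (hc : 0 < c) (hx : 0 ≤ x) (hxs : ∀ i ∉ s, x i = 0)
    {Λ : ι → ℝ} (hΛ : ∀ i, 0 < Λ i) (hΛc : ∑ i ∈ s, Λ i ≤ c) :
    ∑ i, x i * log (Λ i) ≤ linkEntropy c x := by
  rcases (sum_nonneg fun r _ => hx r : 0 ≤ ∑ r, x r).eq_or_lt with hM | hM
  · simp [linkEntropy, (Fintype.sum_eq_zero_iff_of_nonneg hx).1 hM.symm]
  have hgibbs := sum_le_sum fun i (_ : i ∈ s) =>
    sub_le_mul_log_div (hx i) (div_pos (mul_pos hM (hΛ i)) hc)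
  linarith [linkEntropy_sub_sum_mul_log hc hx hxs hΛ hM, sum_sub_mul_div_nonneg hc hx hxs hΛc]

theorem mul_eq_of_linkEntropy_le (hc : 0 < c) (hx : 0 ≤ x) (hxs : ∀ i ∉ s, x i = 0)
    {Λ : ι → ℝ} (hΛ : ∀ i, 0 < Λ i) (hΛc : ∑ i ∈ s, Λ i ≤ c)
    (h : linkEntropy c x ≤ ∑ i, x i * log (Λ i)) {i : ι} (hi : i ∈ s) :
    (∑ r, x r) * Λ i = x i * c := by
  rcases (sum_nonneg fun r _ => hx r : 0 ≤ ∑ r, x r).eq_or_lt with hM | hM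
  · simp [(Fintype.sum_eq_zero_iff_of_nonneg hx).1 hM.symm]
  have hβ : ∀ i, 0 < (∑ r, x r) * Λ i / c := fun i => div_pos (mul_pos hM (hΛ i)) hc
  have hgibbs := fun i (_ : i ∈ s) => sub_le_mul_log_div (hx i) (hβ i)
  have heq := (sum_eq_sum_iff_of_le hgibbs).1 (le_antisymm (sum_le_sum hgibbs) (by
    linarith [linkEntropy_sub_sum_mul_log hc hx hxs hΛ hM, sum_sub_mul_div_nonneg hc hx hxs hΛc]))
  rw [eq_of_mul_log_div_le_sub (hx i) (hβ i) (heq i hi).ge]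
  field_simp

theorem linkEntropy_eq_sum_mul_log (hx : 0 ≤ x) (hxs : ∀ i ∉ s, x i = 0)
    {Λ : ι → ℝ} (h : ∀ i ∈ s, (∑ r, x r) * Λ i = x i * c) :
    linkEntropy c x = ∑ i, x i * log (Λ i) := by
  refine sum_congr rfl fun i _ => ?_
  by_cases hi : i ∈ s
  · rcases (hx i).eq_or_lt with h0 | hpos
    · simp [← h0]
    · rw [← h i hi, mul_div_cancel_left₀ _ (sum_pos' (fun r _ => hx r) ⟨i, mem_univ i, hpos⟩).ne']
  · simp [hxs i hi]

/-- `x` is the flow on a link of capacity `c` crossed by the routes in `s`, and `b` the route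
rates: changing the flow on this link alone to any `y` does not decrease the primal objective. -/
def IsLinkMinimizer (s : Finset ι) (c : ℝ) (G : ι → ℝ → ℝ) (b x : ι → ℝ) : Prop :=
  ∀ y : ι → ℝ, 0 ≤ y → (∀ i ∉ s, y i = 0) → (∀ i, 0 < b i + (y i - x i)) →
    linkEntropy c x - ∑ i, G i (b i) ≤ linkEntropy c y - ∑ i, G i (b i + (y i - x i))

namespace IsLinkMinimizer

variable {G : ι → ℝ → ℝ} {b : ι → ℝ}

theorem sum_deriv_mul_le_linkEntropy (h : IsLinkMinimizer s c G b 0) (hb : ∀ i, 0 < b i)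
    (hGd : ∀ i, DifferentiableAt ℝ (G i) (b i)) {w : ι → ℝ} (hw : 0 ≤ w)
    (hws : ∀ i ∉ s, w i = 0) : ∑ i, deriv (G i) (b i) * w i ≤ linkEntropy c w := by
  have hψ : HasDerivAt (fun t => ∑ i, G i (b i + t * w i)) (∑ i, deriv (G i) (b i) * w i) 0 := by
    refine HasDerivAt.fun_sum fun i _ => ?_
    have hG : HasDerivAt (G i) (deriv (G i) (b i)) (b i + 0 * w i) := by
      simpa using (hGd i).hasDerivAt
    exact hG.comp 0 ((hasDerivAt_mul_const (w i)).const_add (b i))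
  refine le_of_tendsto hψ.tendsto_slope_zero_right (eventually_mem_nhdsWithin.mono fun t ht => ?_)
  have hmin := h (t • w) (smul_nonneg (le_of_lt ht) hw) (fun i hi => by simp [hws i hi])
    (fun i => by simpa using add_pos_of_pos_of_nonneg (hb i) (mul_nonneg (le_of_lt ht) (hw i)))
  have h0 : linkEntropy c (0 : ι → ℝ) = 0 := by simp [linkEntropy]
  simp only [linkEntropy_smul ht, h0, Pi.smul_apply, Pi.zero_apply, smul_eq_mul, sub_zero]
    at hmin
  simp only [zero_add, zero_mul, add_zero, smul_eq_mul]
  rw [inv_mul_le_iff₀ ht]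
  linarith

variable [DecidableEq ι]

theorem le_of_perturb (h : IsLinkMinimizer s c G b x) (hc : 0 < c) (hx : 0 ≤ x)
    (hxs : ∀ i ∉ s, x i = 0) (hb : ∀ i, 0 < b i) {i : ι} (hi : i ∈ s) {t : ℝ}
    (hxt : 0 ≤ x i + t) (hbt : 0 < b i + t) :
    x i * log (x i) + (∑ r, x r) * log c - (∑ r, x r) * log (∑ r, x r) - G i (b i) ≤
      (x i + t) * log (x i + t) + (∑ r, x r + t) * log c
        - (∑ r, x r + t) * log (∑ r, x r + t) - G i (b i + t) := by
  set y := Function.update x i (x i + t)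
  have hy : 0 ≤ y := by
    intro k
    rcases eq_or_ne k i with rfl | hk
    · simpa [y] using hxt
    · simpa [y, hk] using hx k
  have hys : ∀ k ∉ s, y k = 0 := fun k hk => by
    simp [y, ne_of_mem_of_not_mem hi hk |>.symm, hxs k hk]
  have hby : ∀ k, b k + (y k - x k) = Function.update b i (b i + t) k := by
    intro k
    rcases eq_or_ne k i with rfl | hk
    · simp [y]
    · simp [y, hk]
  have hmin := h y hy hys fun k => by
    rw [hby]
    rcases eq_or_ne k i with rfl | hk
    · simpa using hbt
    · simpa [hk] using hb k
  have hylog : ∑ k, y k * log (y k) =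
      ∑ k, x k * log (x k) - x i * log (x i) + (x i + t) * log (x i + t) := by
    simp only [y, Function.apply_update (fun _ u => u * log u), sum_update_eq_sum_sub_add]
  have hysum : ∑ k, y k = ∑ k, x k + t := by
    rw [sum_update_eq_sum_sub_add]; ring
  simp only [hby, Function.apply_update G, sum_update_eq_sum_sub_add] at hmin
  rw [linkEntropy_eq_of_nonneg hc hx, linkEntropy_eq_of_nonneg hc hy, hylog, hysum] at hmin
  linarith

theorem log_mul_div_eq_deriv (h : IsLinkMinimizer s c G b x) (hc : 0 < c) (hx : 0 ≤ x)
    (hxs : ∀ i ∉ s, x i = 0) (hb : ∀ i, 0 < b i) {i : ι} (hGd : DifferentiableAt ℝ (G i) (b i))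
    (hxi : 0 < x i) : log (x i * c / ∑ r, x r) = deriv (G i) (b i) := by
  have hi : i ∈ s := by
    by_contra hi
    exact hxi.ne' (hxs i hi)
  set M := ∑ r, x r
  have hM : 0 < M := sum_pos' (fun r _ => hx r) ⟨i, mem_univ i, hxi⟩
  set φ : ℝ → ℝ := fun t => (x i + t) * log (x i + t) + (M + t) * log c
    - (M + t) * log (M + t) - G i (b i + t)
  have hmin : IsLocalMin φ 0 := by
    filter_upwards [eventually_gt_nhds (neg_lt_zero.2 hxi),
      eventually_gt_nhds (neg_lt_zero.2 (hb i))] with t hxt hbt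
    simpa [φ] using h.le_of_perturb hc hx hxs hb hi (t := t) (by linarith) (by linarith)
  have hderiv :
      HasDerivAt φ ((log (x i) + 1) + 1 * log c - (log M + 1) - deriv (G i) (b i)) 0 := by
    have hxlog := (hasDerivAt_mul_log hxi.ne').comp_const_add_zero
    have hMlog := (hasDerivAt_mul_log hM.ne').comp_const_add_zero
    exact ((hxlog.add (((hasDerivAt_id 0).const_add M).mul_const (log c))).sub hMlog).sub
      hGd.hasDerivAt.comp_const_add_zero
  have := hmin.hasDerivAt_eq_zero hderiv
  rw [log_div (mul_pos hxi hc).ne' hM.ne', log_mul hxi.ne' hc.ne']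
  linarith

theorem pos_of_sum_pos (h : IsLinkMinimizer s c G b x) (hc : 0 < c) (hx : 0 ≤ x)
    (hxs : ∀ i ∉ s, x i = 0) (hb : ∀ i, 0 < b i) {i : ι} (hGd : DifferentiableAt ℝ (G i) (b i))
    (hi : i ∈ s) (hM : 0 < ∑ r, x r) : 0 < x i := by
  by_contra hneg
  have hxi : x i = 0 := le_antisymm (not_lt.1 hneg) (hx i)
  -- the slope of `t ↦ t log t` at `0⁺` is `-∞`, which beats the finite slopes of the other terms
  set M := ∑ r, x r
  have hslope : ∀ t > 0, 0 ≤ log t + (log c - t⁻¹ • ((M + t) * log (M + t) - M * log M)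
      - t⁻¹ • (G i (b i + t) - G i (b i))) := by
    intro t ht
    have := h.le_of_perturb hc hx hxs hb hi (t := t) (by linarith) (by linarith [hb i])
    rw [hxi, zero_add] at this
    have key : 0 ≤ t * (log t + (log c - t⁻¹ * ((M + t) * log (M + t) - M * log M)
        - t⁻¹ * (G i (b i + t) - G i (b i)))) := by
      field_simp
      linarith
    simpa using nonneg_of_mul_nonneg_right (by simpa [mul_comm] using key) ht
  have hlim := tendsto_log_nhdsGT_zero.atBot_add ((tendsto_const_nhds (x := log c)).sub
    (hasDerivAt_mul_log hM.ne').tendsto_slope_zero_right |>.sub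
      hGd.hasDerivAt.tendsto_slope_zero_right)
  obtain ⟨t, hneg, ht⟩ :=
    ((hlim.eventually (eventually_lt_atBot 0)).and self_mem_nhdsWithin).exists
  exact (hneg.trans_le (hslope t ht)).false

theorem sum_exp_deriv_le_of_eq_zero (h : IsLinkMinimizer s c G b 0) (hc : 0 < c)
    (hb : ∀ i, 0 < b i) (hGd : ∀ i, DifferentiableAt ℝ (G i) (b i)) :
    ∑ i ∈ s, exp (deriv (G i) (b i)) ≤ c := by
  set w : ι → ℝ := fun i => if i ∈ s then exp (deriv (G i) (b i)) else 0
  have hw : 0 ≤ w := fun i => by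
    dsimp only [w]
    split_ifs <;> positivity
  have hD := h.sum_deriv_mul_le_linkEntropy hb hGd hw fun i hi => by simp [w, hi]
  have hlog : ∑ i, deriv (G i) (b i) * w i = ∑ i, w i * log (w i) := by
    refine sum_congr rfl fun i _ => ?_
    by_cases hi : i ∈ s <;> simp [w, hi, mul_comm]
  have hS : ∑ i, w i = ∑ i ∈ s, exp (deriv (G i) (b i)) := by
    simp [w, sum_ite_mem]
  rw [linkEntropy_eq_of_nonneg hc hw, hlog, hS] at hD
  set S := ∑ i ∈ s, exp (deriv (G i) (b i))
  have hS0 : 0 ≤ S := sum_nonneg fun i _ => (exp_pos _).le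
  rcases hS0.eq_or_lt with hS0 | hS0
  · rw [← hS0]
    exact hc.le
  · rw [← log_le_log_iff hS0 hc]
    nlinarith

theorem mul_exp_deriv_eq (h : IsLinkMinimizer s c G b x) (hc : 0 < c) (hx : 0 ≤ x)
    (hxs : ∀ i ∉ s, x i = 0) (hb : ∀ i, 0 < b i) (hGd : ∀ i, DifferentiableAt ℝ (G i) (b i))
    {i : ι} (hi : i ∈ s) : (∑ r, x r) * exp (deriv (G i) (b i)) = x i * c := by
  rcases (sum_nonneg fun r _ => hx r : 0 ≤ ∑ r, x r).eq_or_lt with hM | hM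
  · simp [(Fintype.sum_eq_zero_iff_of_nonneg hx).1 hM.symm]
  have hxi := h.pos_of_sum_pos hc hx hxs hb (hGd i) hi hM
  rw [← h.log_mul_div_eq_deriv hc hx hxs hb (hGd i) hxi, exp_log (by positivity)]
  field_simp

theorem sum_exp_deriv_le (h : IsLinkMinimizer s c G b x) (hc : 0 < c) (hx : 0 ≤ x)
    (hxs : ∀ i ∉ s, x i = 0) (hb : ∀ i, 0 < b i) (hGd : ∀ i, DifferentiableAt ℝ (G i) (b i)) :
    ∑ i ∈ s, exp (deriv (G i) (b i)) ≤ c := by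
  rcases (sum_nonneg fun r _ => hx r : 0 ≤ ∑ r, x r).eq_or_lt with hM | hM
  · rw [(Fintype.sum_eq_zero_iff_of_nonneg hx).1 hM.symm] at h
    exact h.sum_exp_deriv_le_of_eq_zero hc hb hGd
  refine le_of_eq (mul_left_cancel₀ hM.ne' ?_)
  rw [mul_sum, sum_congr rfl fun i hi => h.mul_exp_deriv_eq hc hx hxs hb hGd hi, ← sum_mul,
    sum_subset (subset_univ s) fun i _ hi => hxs i hi]

end IsLinkMinimizer

end LinkEntropy

section Network

variable {ι κ : Type*} {route : ι → Finset κ} {C : κ → ℝ} {m : κ → ι → ℝ}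

theorem sum_route_eq_sum [Fintype κ] (hmz : ∀ j i, j ∉ route i → m j i = 0) (i : ι) :
    ∑ j ∈ route i, m j i = ∑ j, m j i :=
  sum_subset (subset_univ _) fun j _ hj => hmz j i hj

theorem eq_zero_of_notMem_filter [Fintype ι] [DecidableEq κ]
    (hmz : ∀ j i, j ∉ route i → m j i = 0) (j : κ) :
    ∀ i ∉ univ.filter fun i => j ∈ route i, m j i = 0 :=
  fun i hi => hmz j i (by simpa using hi)

theorem eq_of_mul_eq_of_sum_route_pos [Fintype ι] (hm : ∀ j i, 0 ≤ m j i) {i : ι}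
    (hpos : 0 < ∑ j ∈ route i, m j i) {a b : ℝ}
    (ha : ∀ j ∈ route i, (∑ r, m j r) * a = m j i * C j)
    (hb : ∀ j ∈ route i, (∑ r, m j r) * b = m j i * C j) : a = b := by
  obtain ⟨j, hj, hji⟩ := exists_ne_zero_of_sum_ne_zero hpos.ne'
  have hM : 0 < ∑ r, m j r := sum_pos' (fun r _ => hm j r) ⟨i, mem_univ i, (hm j i).lt_of_ne' hji⟩
  exact mul_left_cancel₀ hM.ne' ((ha j hj).trans (hb j hj).symm)

variable [Fintype ι] [Fintype κ] {Λ : ι → ℝ}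

theorem sum_log_mul_sum_route (hmz : ∀ j i, j ∉ route i → m j i = 0) (Λ : ι → ℝ) :
    ∑ i, log (Λ i) * ∑ j ∈ route i, m j i = ∑ j, ∑ i, m j i * log (Λ i) := by
  rw [sum_comm]
  refine sum_congr rfl fun i _ => ?_
  rw [sum_route_eq_sum hmz, mul_sum]
  exact sum_congr rfl fun j _ => mul_comm _ _

variable [DecidableEq κ]

theorem sum_log_mul_le_sum_linkEntropy (hC : ∀ j, 0 < C j) (hm : ∀ j i, 0 ≤ m j i)
    (hmz : ∀ j i, j ∉ route i → m j i = 0) (hΛ : ∀ i, 0 < Λ i)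
    (hΛC : ∀ j, ∑ i ∈ univ.filter fun i => j ∈ route i, Λ i ≤ C j) :
    ∑ i, log (Λ i) * ∑ j ∈ route i, m j i ≤ ∑ j, linkEntropy (C j) (m j) := by
  rw [sum_log_mul_sum_route hmz]
  exact sum_le_sum fun j _ => sum_mul_log_le_linkEntropy (hC j) (hm j)
    (eq_zero_of_notMem_filter hmz j) hΛ (hΛC j)

theorem mul_eq_of_sum_linkEntropy_le (hC : ∀ j, 0 < C j) (hm : ∀ j i, 0 ≤ m j i)
    (hmz : ∀ j i, j ∉ route i → m j i = 0) (hΛ : ∀ i, 0 < Λ i)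
    (hΛC : ∀ j, ∑ i ∈ univ.filter fun i => j ∈ route i, Λ i ≤ C j)
    (h : ∑ j, linkEntropy (C j) (m j) ≤ ∑ i, log (Λ i) * ∑ j ∈ route i, m j i) :
    ∀ j i, j ∈ route i → (∑ r, m j r) * Λ i = m j i * C j := by
  intro j i hji
  have hlink := fun j (_ : j ∈ univ) => sum_mul_log_le_linkEntropy (hC j) (hm j)
    (eq_zero_of_notMem_filter hmz j) hΛ (hΛC j)
  rw [sum_log_mul_sum_route hmz] at h
  have heq := (sum_eq_sum_iff_of_le hlink).1 (le_antisymm (sum_le_sum hlink) h) j (mem_univ j)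
  exact mul_eq_of_linkEntropy_le (hC j) (hm j) (eq_zero_of_notMem_filter hmz j) hΛ (hΛC j)
    heq.ge (by simpa using hji)

theorem sum_linkEntropy_eq_of_mul_eq (hm : ∀ j i, 0 ≤ m j i)
    (hmz : ∀ j i, j ∉ route i → m j i = 0)
    (h : ∀ j i, j ∈ route i → (∑ r, m j r) * Λ i = m j i * C j) :
    ∑ j, linkEntropy (C j) (m j) = ∑ i, log (Λ i) * ∑ j ∈ route i, m j i := by
  rw [sum_log_mul_sum_route hmz]
  exact sum_congr rfl fun j _ => linkEntropy_eq_sum_mul_log (hm j)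
    (eq_zero_of_notMem_filter hmz j) fun i hi => h j i (by simpa using hi)

theorem isLinkMinimizer_of_forall_le {G : ι → ℝ → ℝ} {mbar : ι → ℝ} (hm : ∀ j i, 0 ≤ m j i)
    (hmz : ∀ j i, j ∉ route i → m j i = 0) (hfeas : ∀ i, ∑ j ∈ route i, m j i = mbar i)
    (hopt : ∀ (m' : κ → ι → ℝ) (mbar' : ι → ℝ), (∀ j i, 0 ≤ m' j i) →
      (∀ j i, j ∉ route i → m' j i = 0) → (∀ i, 0 < mbar' i) →
      (∀ i, ∑ j ∈ route i, m' j i = mbar' i) →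
      ∑ j, linkEntropy (C j) (m j) - ∑ i, G i (mbar i) ≤
        ∑ j, linkEntropy (C j) (m' j) - ∑ i, G i (mbar' i))
    (j : κ) : IsLinkMinimizer (univ.filter fun i => j ∈ route i) (C j) G mbar (m j) := by
  intro y hy hys hpos
  set m' := Function.update m j y
  have hm' : ∀ k i, m' k i = Function.update (fun k => m k i) j (y i) k := fun k i =>
    Function.apply_update (fun _ v => v i) m j y k
  have hm'nn : ∀ k i, 0 ≤ m' k i := by
    intro k i
    rcases eq_or_ne k j with rfl | hk
    · simpa [m'] using hy i
    · simpa [m', hk] using hm k i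
  have hm'z : ∀ k i, k ∉ route i → m' k i = 0 := by
    intro k i hki
    rcases eq_or_ne k j with rfl | hk
    · simpa [m'] using hys i (by simpa using hki)
    · simpa [m', hk] using hmz k i hki
  have hfeas' : ∀ i, ∑ k ∈ route i, m' k i = mbar i + (y i - m j i) := by
    intro i
    rw [sum_route_eq_sum hm'z, sum_congr rfl fun k _ => hm' k i, sum_update_eq_sum_sub_add,
      ← sum_route_eq_sum hmz, hfeas]
    ring
  have hmin := hopt m' _ hm'nn hm'z hpos hfeas'
  simp only [m', Function.apply_update (fun k => linkEntropy (C k)), sum_update_eq_sum_sub_add]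
    at hmin
  linarith

end Network

section Duality

variable {ι κ : Type*} [Fintype ι] {route : ι → Finset κ} {C : κ → ℝ} {U G : ι → ℝ → ℝ}
  {m : κ → ι → ℝ} {mbar Λ : ι → ℝ}

theorem sum_le_sum_log_mul_sub
    (hU : ∀ i lam, IsLeast {x | ∃ m, 0 < m ∧ x = lam * m - G i m} (U i (exp lam)))
    (hΛ : ∀ i, 0 < Λ i) (hmbar : ∀ i, 0 < mbar i) :
    ∑ i, U i (Λ i) ≤ ∑ i, log (Λ i) * mbar i - ∑ i, G i (mbar i) := by
  rw [← sum_sub_distrib]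
  exact sum_le_sum fun i _ => by
    simpa [exp_log (hΛ i)] using (hU i (log (Λ i))).2 ⟨mbar i, hmbar i, rfl⟩

variable [Fintype κ] [DecidableEq κ]

theorem dual_le_primal
    (hU : ∀ i lam, IsLeast {x | ∃ m, 0 < m ∧ x = lam * m - G i m} (U i (exp lam)))
    (hC : ∀ j, 0 < C j) (hm : ∀ j i, 0 ≤ m j i) (hmz : ∀ j i, j ∉ route i → m j i = 0)
    (hmbar : ∀ i, 0 < mbar i) (hfeas : ∀ i, ∑ j ∈ route i, m j i = mbar i)
    (hΛ : ∀ i, 0 < Λ i) (hΛC : ∀ j, ∑ i ∈ univ.filter fun i => j ∈ route i, Λ i ≤ C j) :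
    ∑ i, U i (Λ i) ≤ ∑ j, linkEntropy (C j) (m j) - ∑ i, G i (mbar i) := by
  have hweak := sum_log_mul_le_sum_linkEntropy hC hm hmz hΛ hΛC
  simp only [hfeas] at hweak
  linarith [sum_le_sum_log_mul_sub hU hΛ hmbar]

theorem mul_eq_of_primal_le_dual
    (hU : ∀ i lam, IsLeast {x | ∃ m, 0 < m ∧ x = lam * m - G i m} (U i (exp lam)))
    (hC : ∀ j, 0 < C j) (hm : ∀ j i, 0 ≤ m j i) (hmz : ∀ j i, j ∉ route i → m j i = 0)
    (hmbar : ∀ i, 0 < mbar i) (hfeas : ∀ i, ∑ j ∈ route i, m j i = mbar i)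
    (hΛ : ∀ i, 0 < Λ i) (hΛC : ∀ j, ∑ i ∈ univ.filter fun i => j ∈ route i, Λ i ≤ C j)
    (h : ∑ j, linkEntropy (C j) (m j) - ∑ i, G i (mbar i) ≤ ∑ i, U i (Λ i)) :
    ∀ j i, j ∈ route i → (∑ r, m j r) * Λ i = m j i * C j := by
  refine mul_eq_of_sum_linkEntropy_le hC hm hmz hΛ hΛC ?_
  simp only [hfeas]
  linarith [sum_le_sum_log_mul_sub hU hΛ hmbar]

theorem dual_eq_primal_of_mul_eq
    (hU : ∀ i lam, IsLeast {x | ∃ m, 0 < m ∧ x = lam * m - G i m} (U i (exp lam)))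
    (hG : ∀ i, ConcaveOn ℝ (Set.Ioi 0) (G i)) (hGd : ∀ i, DifferentiableAt ℝ (G i) (mbar i))
    (hm : ∀ j i, 0 ≤ m j i) (hmz : ∀ j i, j ∉ route i → m j i = 0)
    (hmbar : ∀ i, 0 < mbar i) (hfeas : ∀ i, ∑ j ∈ route i, m j i = mbar i)
    (h : ∀ j i, j ∈ route i → (∑ r, m j r) * exp (deriv (G i) (mbar i)) = m j i * C j) :
    ∑ i, U i (exp (deriv (G i) (mbar i))) =
      ∑ j, linkEntropy (C j) (m j) - ∑ i, G i (mbar i) := by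
  rw [sum_linkEntropy_eq_of_mul_eq hm hmz h, ← sum_sub_distrib]
  refine sum_congr rfl fun i _ => ?_
  rw [hfeas, log_exp]
  exact (hU i _).unique (isLeast_deriv_mul_sub (hG i) (hmbar i) (hGd i))

end Duality

theorem stmt17_general (J n : ℕ) (route : Fin n → Finset (Fin J))
    (C : Fin J → ℝ) (hC : ∀ j, 0 < C j)
    (U G : Fin n → ℝ → ℝ)
    (hG : ∀ i, StrictConcaveOn ℝ (Set.Ioi 0) (G i))
    (hGdiff : ∀ i, ∀ m ∈ Set.Ioi (0 : ℝ), DifferentiableAt ℝ (G i) m)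
    (hU : ∀ i (lam : ℝ),
      IsLeast {x : ℝ | ∃ m : ℝ, 0 < m ∧ x = lam * m - G i m} (U i (Real.exp lam)))
    (mstar : Fin J → Fin n → ℝ) (mbarstar Λstar : Fin n → ℝ)
    (hm : ∀ j i, 0 ≤ mstar j i) (hmz : ∀ j i, j ∉ route i → mstar j i = 0)
    (hmbar : ∀ i, 0 < mbarstar i) (hΛpos : ∀ i, 0 < Λstar i) :
    (((∀ i, (∑ j ∈ route i, mstar j i) = mbarstar i) ∧
        ∀ (m : Fin J → Fin n → ℝ) (mbar : Fin n → ℝ),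
          (∀ j i, 0 ≤ m j i) → (∀ j i, j ∉ route i → m j i = 0) →
          (∀ i, 0 < mbar i) → (∀ i, (∑ j ∈ route i, m j i) = mbar i) →
          (∑ j, ∑ i, mstar j i * Real.log (mstar j i * C j / ∑ r, mstar j r)) -
              (∑ i, G i (mbarstar i)) ≤
            (∑ j, ∑ i, m j i * Real.log (m j i * C j / ∑ r, m j r)) -
              ∑ i, G i (mbar i)) ∧
      ((∀ j, (∑ i ∈ Finset.univ.filter fun i => j ∈ route i, Λstar i) ≤ C j) ∧
        ∀ Λ : Fin n → ℝ, (∀ i, 0 < Λ i) →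
          (∀ j, (∑ i ∈ Finset.univ.filter fun i => j ∈ route i, Λ i) ≤ C j) →
          (∑ i, U i (Λ i)) ≤ ∑ i, U i (Λstar i))) ↔
    ((∀ i, (∑ j ∈ route i, mstar j i) = mbarstar i) ∧
      (∀ j, (∑ i ∈ Finset.univ.filter fun i => j ∈ route i, Λstar i) ≤ C j) ∧
      (∀ j i, j ∈ route i → (∑ r, mstar j r) * Λstar i = mstar j i * C j) ∧
      (∀ i, Real.exp (deriv (G i) (mbarstar i)) = Λstar i)) := by
  have hGd : ∀ i, DifferentiableAt ℝ (G i) (mbarstar i) := fun i => hGdiff i _ (hmbar i)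
  have hGc : ∀ i, ConcaveOn ℝ (Set.Ioi 0) (G i) := fun i => (hG i).concaveOn
  constructor
  · rintro ⟨⟨hfeas, hpopt⟩, hdfeas, hdopt⟩
    have hlink := isLinkMinimizer_of_forall_le hm hmz hfeas hpopt
    have hcomp : ∀ j i, j ∈ route i →
        (∑ r, mstar j r) * exp (deriv (G i) (mbarstar i)) = mstar j i * C j := fun j i hji =>
      (hlink j).mul_exp_deriv_eq (hC j) (hm j) (eq_zero_of_notMem_filter hmz j) hmbar hGd
        (by simpa using hji)
    have hprice := fun j => (hlink j).sum_exp_deriv_le (hC j) (hm j)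
      (eq_zero_of_notMem_filter hmz j) hmbar hGd
    have hstrong := dual_eq_primal_of_mul_eq hU hGc hGd hm hmz hmbar hfeas hcomp
    have hcompΛ := mul_eq_of_primal_le_dual hU hC hm hmz hmbar hfeas hΛpos hdfeas
      (hstrong ▸ hdopt _ (fun i => exp_pos _) hprice)
    exact ⟨hfeas, hdfeas, hcompΛ, fun i => eq_of_mul_eq_of_sum_route_pos hm (hfeas i ▸ hmbar i)
      (fun j hj => hcomp j i hj) (fun j hj => hcompΛ j i hj)⟩
  · rintro ⟨hfeas, hdfeas, hcomp, hexp⟩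
    obtain rfl : Λstar = fun i => exp (deriv (G i) (mbarstar i)) := funext fun i => (hexp i).symm
    have hstrong := dual_eq_primal_of_mul_eq hU hGc hGd hm hmz hmbar hfeas hcomp
    refine ⟨⟨hfeas, fun m mbar hm' hmz' hmbar' hfeas' => ?_⟩, hdfeas, fun Λ hΛ hΛC => ?_⟩
    · exact hstrong ▸ dual_le_primal hU hC hm' hmz' hmbar' hfeas' hΛpos hdfeas
    · exact hstrong ▸ dual_le_primal hU hC hm hmz hmbar hfeas hΛ hΛC

/-- Optimality conditions for the primal-dual pair: `(m*, m̄*)` is primal optimal and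
`Λ*` is dual optimal if and only if `Σ_{j∈i} m*_{ji} = m̄*_i` for all `i`,
`Σ_{i:j∈i} Λ*_i ≤ C_j` for all `j`, `m*_j·Λ*_i = m*_{ji}·C_j` for all `(j,i) ∈ 𝒦`,
and `exp(G_i'(m̄*_i)) = Λ*_i` for all `i`. -/
theorem stmt17 (J n : ℕ) (route : Fin n → Finset (Fin J))
    (hroute : ∀ i, (route i).Nonempty)
    (C : Fin J → ℝ) (hC : ∀ j, 0 < C j)
    (U G : Fin n → ℝ → ℝ)
    (hG : ∀ i, StrictConcaveOn ℝ (Set.Ioi 0) (G i))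
    (hGdiff : ∀ i, ∀ m ∈ Set.Ioi (0 : ℝ), DifferentiableAt ℝ (G i) m)
    (hGsurj : ∀ i, ∀ y : ℝ, ∃ m > (0 : ℝ), deriv (G i) m = y)
    (hU : ∀ i (lam : ℝ),
      IsLeast {x : ℝ | ∃ m : ℝ, 0 < m ∧ x = lam * m - G i m} (U i (Real.exp lam)))
    (mstar : Fin J → Fin n → ℝ) (mbarstar Λstar : Fin n → ℝ)
    (hm : ∀ j i, 0 ≤ mstar j i) (hmz : ∀ j i, j ∉ route i → mstar j i = 0)
    (hmbar : ∀ i, 0 < mbarstar i) (hΛpos : ∀ i, 0 < Λstar i) :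
    (((∀ i, (∑ j ∈ route i, mstar j i) = mbarstar i) ∧
        ∀ (m : Fin J → Fin n → ℝ) (mbar : Fin n → ℝ),
          (∀ j i, 0 ≤ m j i) → (∀ j i, j ∉ route i → m j i = 0) →
          (∀ i, 0 < mbar i) → (∀ i, (∑ j ∈ route i, m j i) = mbar i) →
          (∑ j, ∑ i, mstar j i * Real.log (mstar j i * C j / ∑ r, mstar j r)) -
              (∑ i, G i (mbarstar i)) ≤
            (∑ j, ∑ i, m j i * Real.log (m j i * C j / ∑ r, m j r)) -
              ∑ i, G i (mbar i)) ∧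
      ((∀ j, (∑ i ∈ Finset.univ.filter fun i => j ∈ route i, Λstar i) ≤ C j) ∧
        ∀ Λ : Fin n → ℝ, (∀ i, 0 < Λ i) →
          (∀ j, (∑ i ∈ Finset.univ.filter fun i => j ∈ route i, Λ i) ≤ C j) →
          (∑ i, U i (Λ i)) ≤ ∑ i, U i (Λstar i))) ↔
    ((∀ i, (∑ j ∈ route i, mstar j i) = mbarstar i) ∧
      (∀ j, (∑ i ∈ Finset.univ.filter fun i => j ∈ route i, Λstar i) ≤ C j) ∧
      (∀ j i, j ∈ route i → (∑ r, mstar j r) * Λstar i = mstar j i * C j) ∧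
      (∀ i, Real.exp (deriv (G i) (mbarstar i)) = Λstar i)) :=
  stmt17_general J n route C hC U G hG hGdiff hU mstar mbarstar Λstar hm hmz hmbar hΛpos
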